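/- arXiv:1502.03540 — 5 statements merged into one kernel-verified Lean document; each statement's English description precedes it below -/
import Mathlib

section
/- For all integers s and t, the commutator g^s h^t g^{−s} h^{−t} equals the 2×2 real matrix with rows (1, t·((1+√2)^s − 1)) and (0, 1). -/
/-!
Both generators lie in the affine group `!![a, b; 0, 1]`: integer powers of `g` are the diagonal
matrices `!![(1+√2)^s, 0; 0, 1]` and integer powers of `h` are the shears `!![1, t; 0, 1]`.
Conjugating the shear by `t` by the diagonal matrix with entry `c` gives the shear by `c t`,
and shears compose additively, so the commutator is the shear by `(1+√2)^s t - t`.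
-/

theorem Units.val_zpow_eq_of_map_add {M : Type*} [Monoid M] (u : Mˣ) (F : ℤ → M)
    (map_zero : F 0 = 1) (map_add : ∀ m n, F (m + n) = F m * F n) (map_one : F 1 = u) (n : ℤ) :
    ((u ^ n : Mˣ) : M) = F n := by
  let φ : Multiplicative ℤ →* M :=
    { toFun := fun m => F m.toAdd
      map_one' := map_zero
      map_mul' := fun m n => map_add m.toAdd n.toAdd }
  have hφ : φ.toHomUnits = zpowersHom Mˣ u :=
    MonoidHom.ext_mint (Units.ext (by simpa [φ] using map_one))
  simpa [φ] using congrArg (fun ψ : Multiplicative ℤ →* Mˣ => (ψ (.ofAdd n) : M)) hφ.symm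

section AffineMatrices

variable {R K : Type*}

theorem shear_mul_shear [Semiring R] (x y : R) :
    !![1, x; 0, 1] * !![1, y; 0, 1] = !![1, x + y; 0, 1] := by
  simp [add_comm]

theorem diag_mul_diag [Semiring R] (a b : R) :
    !![a, 0; 0, 1] * !![b, 0; 0, 1] = !![a * b, 0; 0, 1] := by
  simp

theorem val_zpow_of_val_eq_shear [Ring R] (h : (Matrix (Fin 2) (Fin 2) R)ˣ)
    (hh : (h : Matrix (Fin 2) (Fin 2) R) = !![1, 1; 0, 1]) (t : ℤ) :
    ((h ^ t : (Matrix (Fin 2) (Fin 2) R)ˣ) : Matrix (Fin 2) (Fin 2) R) = !![1, (t : R); 0, 1] :=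
  h.val_zpow_eq_of_map_add (fun t => !![1, (t : R); 0, 1]) (by simp [Matrix.one_fin_two])
    (fun m n => by rw [shear_mul_shear, Int.cast_add]) (by simp [hh]) t

theorem diag_mul_shear_mul_diag_inv [DivisionRing K] {c : K} (hc : c ≠ 0) (x : K) :
    !![c, 0; 0, 1] * !![1, x; 0, 1] * !![c⁻¹, 0; 0, 1] = !![1, c * x; 0, 1] := by
  simp [hc]

theorem val_zpow_of_val_eq_diag [DivisionRing K] {a : K} (ha : a ≠ 0)
    (g : (Matrix (Fin 2) (Fin 2) K)ˣ)
    (hg : (g : Matrix (Fin 2) (Fin 2) K) = !![a, 0; 0, 1]) (s : ℤ) :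
    ((g ^ s : (Matrix (Fin 2) (Fin 2) K)ˣ) : Matrix (Fin 2) (Fin 2) K) = !![a ^ s, 0; 0, 1] :=
  g.val_zpow_eq_of_map_add (fun s => !![a ^ s, 0; 0, 1]) (by simp [Matrix.one_fin_two])
    (fun m n => by rw [diag_mul_diag, zpow_add₀ ha]) (by simp [hg]) s

end AffineMatrices

/-- For all integers `s` and `t`, the commutator `g^s h^t g^{-s} h^{-t}` of
`g = !![1+√2, 0; 0, 1]` and `h = !![1, 1; 0, 1]` (as invertible real matrices) equals
the matrix `!![1, t((1+√2)^s - 1); 0, 1]`. -/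
theorem stmt5 (g h : (Matrix (Fin 2) (Fin 2) ℝ)ˣ)
    (hg : (g : Matrix (Fin 2) (Fin 2) ℝ) = !![1 + Real.sqrt 2, 0; 0, 1])
    (hh : (h : Matrix (Fin 2) (Fin 2) ℝ) = !![1, 1; 0, 1])
    (s t : ℤ) :
    ((g ^ s * h ^ t * g ^ (-s) * h ^ (-t) : (Matrix (Fin 2) (Fin 2) ℝ)ˣ) :
        Matrix (Fin 2) (Fin 2) ℝ)
      = !![1, (t : ℝ) * ((1 + Real.sqrt 2) ^ s - 1); 0, 1] := by
  have ha : 1 + Real.sqrt 2 ≠ 0 := by positivity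
  rw [Units.val_mul, Units.val_mul, Units.val_mul, val_zpow_of_val_eq_diag ha g hg,
    val_zpow_of_val_eq_diag ha g hg, val_zpow_of_val_eq_shear h hh, val_zpow_of_val_eq_shear h hh,
    zpow_neg, diag_mul_shear_mul_diag_inv (zpow_ne_zero s ha), Int.cast_neg,
    shear_mul_shear, ← sub_eq_add_neg, mul_comm, mul_sub_one]
end

section
/- The commutator subgroup ⁅G,G⁆ of the group G equals the subgroup of GL_2(ℝ) generated by the matrices u and v. -/
/-!
Everything happens inside the affine group `x ↦ a x + b`, realised as the matrices
`affineMatrix a b = !![a, b; 0, 1]`. Both generators lie in `affineSubgroup zsqrt2 sqrt2Ideal`: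
`a` is a unit of `ℤ[√2]` with `a ≡ 1 mod √2`, and `b ∈ ℤ[√2]`. The commutator of `x ↦ a x + b`
and `x ↦ c x + d` is the translation by `(a - 1) d + (1 - c) b`, which lies in the ideal
`√2 ℤ[√2] = ℤ√2 + 2ℤ`, and translations by this ideal form exactly `⟨u, v⟩`. Conversely
`u = ⁅g, h⁆` and `v = ⁅g, u⁆`.
-/

open Multiplicative
open scoped commutatorElement

section Affine

variable {K : Type*} [Field K]

def affineMatrix (a b : K) : Matrix (Fin 2) (Fin 2) K := !![a, b; 0, 1]

lemma affineMatrix_mul (a b c d : K) :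
    affineMatrix a b * affineMatrix c d = affineMatrix (a * c) (a * d + b) := by
  simp [affineMatrix, add_comm]

lemma affineMatrix_one_zero : affineMatrix (1 : K) 0 = 1 := by
  simp [affineMatrix, Matrix.one_fin_two]

lemma det_affineMatrix (a b : K) : (affineMatrix a b).det = a := by
  simp [affineMatrix, Matrix.det_fin_two]

variable {x y : GL (Fin 2) K} {a b c d : K}

lemma ne_zero_of_coe_eq_affineMatrix (hx : (x : Matrix (Fin 2) (Fin 2) K) = affineMatrix a b) :
    a ≠ 0 := by
  have hdet := (Matrix.isUnit_iff_isUnit_det _).1 x.isUnit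
  rw [hx, det_affineMatrix] at hdet
  exact hdet.ne_zero

lemma coe_inv_of_coe_eq_affineMatrix (hx : (x : Matrix (Fin 2) (Fin 2) K) = affineMatrix a b) :
    ((x⁻¹ : GL (Fin 2) K) : Matrix (Fin 2) (Fin 2) K) = affineMatrix a⁻¹ (-(a⁻¹ * b)) := by
  have ha := ne_zero_of_coe_eq_affineMatrix hx
  refine Units.inv_eq_of_mul_eq_one_right ?_
  rw [hx, affineMatrix_mul, mul_inv_cancel₀ ha, mul_neg, mul_inv_cancel_left₀ ha, neg_add_cancel,
    affineMatrix_one_zero]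

lemma coe_commutatorElement_of_coe_eq_affineMatrix
    (hx : (x : Matrix (Fin 2) (Fin 2) K) = affineMatrix a b)
    (hy : (y : Matrix (Fin 2) (Fin 2) K) = affineMatrix c d) :
    ((⁅x, y⁆ : GL (Fin 2) K) : Matrix (Fin 2) (Fin 2) K) =
      affineMatrix 1 ((a - 1) * d + (1 - c) * b) := by
  have ha := ne_zero_of_coe_eq_affineMatrix hx
  have hc := ne_zero_of_coe_eq_affineMatrix hy
  rw [commutatorElement_def, Units.val_mul, Units.val_mul, Units.val_mul, hx, hy,
    coe_inv_of_coe_eq_affineMatrix hx, coe_inv_of_coe_eq_affineMatrix hy]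
  simp only [affineMatrix_mul]
  congr 1
  · field_simp
  · field_simp; ring

def translation : Multiplicative K →* GL (Fin 2) K :=
  MonoidHom.toHomUnits
    { toFun := fun t => affineMatrix 1 t.toAdd
      map_one' := affineMatrix_one_zero
      map_mul' := fun s t => by rw [affineMatrix_mul, one_mul, one_mul, toAdd_mul, add_comm] }

lemma Submodule.mul_mem_of_mem_subring {R : Subring K} (I : Submodule R K) {r t : K} (hr : r ∈ R)
    (ht : t ∈ I) : r * t ∈ I :=
  I.smul_mem ⟨r, hr⟩ ht

variable (R : Subring K) (I : Submodule R K)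

def affineSubgroup : Subgroup (GL (Fin 2) K) where
  carrier := {x | ∃ a b, (x : Matrix (Fin 2) (Fin 2) K) = affineMatrix a b ∧
    a ∈ R ∧ a⁻¹ ∈ R ∧ a - 1 ∈ I ∧ b ∈ R}
  one_mem' := ⟨1, 0, affineMatrix_one_zero.symm, R.one_mem, by simp, by simp, R.zero_mem⟩
  mul_mem' := by
    rintro x y ⟨a, b, hx, haR, ha'R, haI, hbR⟩ ⟨c, d, hy, hcR, hc'R, hcI, hdR⟩
    refine ⟨a * c, a * d + b, by rw [Units.val_mul, hx, hy, affineMatrix_mul], R.mul_mem haR hcR,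
      ?_, ?_, R.add_mem (R.mul_mem haR hdR) hbR⟩
    · rw [mul_inv]; exact R.mul_mem ha'R hc'R
    · have : a * c - 1 = a * (c - 1) + (a - 1) := by ring
      rw [this]
      exact I.add_mem (I.mul_mem_of_mem_subring haR hcI) haI
  inv_mem' := by
    rintro x ⟨a, b, hx, haR, ha'R, haI, hbR⟩
    have ha := ne_zero_of_coe_eq_affineMatrix hx
    refine ⟨a⁻¹, -(a⁻¹ * b), coe_inv_of_coe_eq_affineMatrix hx, ha'R, by rwa [inv_inv], ?_,
      R.neg_mem (R.mul_mem ha'R hbR)⟩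
    have : a⁻¹ - 1 = -a⁻¹ * (a - 1) := by field_simp; ring
    rw [this]
    exact I.mul_mem_of_mem_subring (R.neg_mem ha'R) haI

lemma commutator_affineSubgroup_le {H : Subgroup (GL (Fin 2) K)}
    (hH : ∀ t ∈ I, translation (ofAdd t) ∈ H) :
    ⁅affineSubgroup R I, affineSubgroup R I⁆ ≤ H := by
  rw [Subgroup.commutator_le]
  rintro x ⟨a, b, hx, -, -, haI, hbR⟩ y ⟨c, d, hy, -, -, hcI, hdR⟩
  have hxy : ⁅x, y⁆ = translation (ofAdd ((a - 1) * d + (1 - c) * b)) :=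
    Units.ext (coe_commutatorElement_of_coe_eq_affineMatrix hx hy)
  have hc' : 1 - c ∈ I := by simpa using I.neg_mem hcI
  rw [hxy, mul_comm (a - 1), mul_comm (1 - c)]
  exact hH _ (I.add_mem (I.mul_mem_of_mem_subring hdR haI) (I.mul_mem_of_mem_subring hbR hc'))

lemma translation_intCast_mul_add_mem_closure (m n : ℤ) (s t : K) :
    translation (ofAdd (m * s + n * t)) ∈
      Subgroup.closure {translation (ofAdd s), translation (ofAdd t)} := by
  rw [← zsmul_eq_mul, ← zsmul_eq_mul, ofAdd_add, ofAdd_zsmul, ofAdd_zsmul, map_mul, map_zpow,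
    map_zpow]
  exact mul_mem (zpow_mem (Subgroup.subset_closure (Set.mem_insert _ _)) m)
    (zpow_mem (Subgroup.subset_closure (Set.mem_insert_of_mem _ (Set.mem_singleton _))) n)

end Affine

noncomputable def zsqrt2 : Subring ℝ := (Zsqrtd.lift (d := 2) ⟨√2, by norm_num⟩).range

noncomputable def sqrt2Ideal : Submodule zsqrt2 ℝ := Submodule.span zsqrt2 {√2}

lemma add_mul_sqrt_two_mem_zsqrt2 (m n : ℤ) : (m + n * √2 : ℝ) ∈ zsqrt2 :=
  ⟨⟨m, n⟩, by simp⟩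

lemma exists_eq_of_mem_sqrt2Ideal {t : ℝ} (ht : t ∈ sqrt2Ideal) :
    ∃ m n : ℤ, m * √2 + n * 2 = t := by
  obtain ⟨r, rfl⟩ := Submodule.mem_span_singleton.1 ht
  obtain ⟨z, hz⟩ := r.2
  refine ⟨z.re, z.im, ?_⟩
  rw [Subring.smul_def, ← hz, Zsqrtd.lift_apply_apply]
  linear_combination -(z.im : ℝ) * Real.mul_self_sqrt (zero_le_two : (0:ℝ) ≤ 2)

lemma one_add_sqrt_two_mem_zsqrt2 : 1 + √2 ∈ zsqrt2 := by
  simpa using add_mul_sqrt_two_mem_zsqrt2 1 1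

lemma inv_one_add_sqrt_two_mem_zsqrt2 : (1 + √2)⁻¹ ∈ zsqrt2 := by
  have : (1 + √2)⁻¹ = -1 + 1 * √2 :=
    inv_eq_of_mul_eq_one_right (by linear_combination Real.mul_self_sqrt zero_le_two)
  simpa [this] using add_mul_sqrt_two_mem_zsqrt2 (-1) 1

lemma sqrt_two_mem_sqrt2Ideal : √2 ∈ sqrt2Ideal := Submodule.mem_span_singleton_self _

/-- The commutator subgroup of `G = ⟨g, h⟩ ≤ GL₂(ℝ)`, where `g = !![1+√2, 0; 0, 1]`
and `h = !![1, 1; 0, 1]`, equals the subgroup generated by `u = !![1, √2; 0, 1]` and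
`v = !![1, 2; 0, 1]`. -/
theorem stmt8 (g h u v : (Matrix (Fin 2) (Fin 2) ℝ)ˣ)
    (hg : (g : Matrix (Fin 2) (Fin 2) ℝ) = !![1 + Real.sqrt 2, 0; 0, 1])
    (hh : (h : Matrix (Fin 2) (Fin 2) ℝ) = !![1, 1; 0, 1])
    (hu : (u : Matrix (Fin 2) (Fin 2) ℝ) = !![1, Real.sqrt 2; 0, 1])
    (hv : (v : Matrix (Fin 2) (Fin 2) ℝ) = !![1, 2; 0, 1]) :
    ⁅Subgroup.closure {g, h}, Subgroup.closure {g, h}⁆ = Subgroup.closure {u, v} := by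
  set G := Subgroup.closure {g, h}
  have hgG : g ∈ G := Subgroup.subset_closure (Set.mem_insert _ _)
  have hhG : h ∈ G := Subgroup.subset_closure (Set.mem_insert_of_mem _ (Set.mem_singleton _))
  have hG : G ≤ affineSubgroup zsqrt2 sqrt2Ideal := by
    rw [Subgroup.closure_le]
    rintro _ (rfl | rfl)
    · exact ⟨_, _, hg, one_add_sqrt_two_mem_zsqrt2, inv_one_add_sqrt_two_mem_zsqrt2,
        by simpa using sqrt_two_mem_sqrt2Ideal, zsqrt2.zero_mem⟩
    · exact ⟨_, _, hh, zsqrt2.one_mem, by simp, by simp, zsqrt2.one_mem⟩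
  have hu_eq : u = ⁅g, h⁆ := Units.ext <| by
    rw [coe_commutatorElement_of_coe_eq_affineMatrix hg hh, hu]
    simp [affineMatrix]
  have hv_eq : v = ⁅g, u⁆ := Units.ext <| by
    rw [coe_commutatorElement_of_coe_eq_affineMatrix hg hu, hv]
    simp [affineMatrix]
  have huG : u ∈ G := by
    rw [hu_eq, commutatorElement_def]
    exact mul_mem (mul_mem (mul_mem hgG hhG) (inv_mem hgG)) (inv_mem hhG)
  apply le_antisymm
  · refine (Subgroup.commutator_mono hG hG).trans (commutator_affineSubgroup_le _ _ fun t ht => ?_)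
    obtain ⟨m, n, rfl⟩ := exists_eq_of_mem_sqrt2Ideal ht
    rw [show u = translation (ofAdd √2) from Units.ext hu,
      show v = translation (ofAdd 2) from Units.ext hv]
    exact translation_intCast_mul_add_mem_closure m n _ _
  · rw [Subgroup.closure_le]
    rintro _ (rfl | rfl)
    · exact hu_eq ▸ Subgroup.commutator_mem_commutator hgG hhG
    · exact hv_eq ▸ Subgroup.commutator_mem_commutator hgG huG
end

section
/- The element h² belongs to the commutator subgroup ⁅G,G⁆ of G. -/
/-!
Conjugation by `diag(a, 1)` multiplies the upper-right entry of a unipotent matrix by `a`, so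
`⁅g, u x⁆ = u (√2 x)` for `u x = !![1, x; 0, 1]`. Starting from `h = u 1` and commuting with `g`
twice gives `u (√2 · √2) = u 2 = h²`.
-/

open Matrix.GeneralLinearGroup
open scoped commutatorElement

section UpperRight

variable {R : Type*} [Ring R]

theorem mul_upperRightHom_of_val_eq_diag {d : GL (Fin 2) R} {a : R}
    (hd : (d : Matrix (Fin 2) (Fin 2) R) = !![a, 0; 0, 1]) (x : R) :
    d * upperRightHom x = upperRightHom (a * x) * d := by
  ext i j
  fin_cases i <;> fin_cases j <;> simp [hd, Matrix.mul_apply]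

theorem commutatorElement_upperRightHom_of_val_eq_diag {d : GL (Fin 2) R} {a : R}
    (hd : (d : Matrix (Fin 2) (Fin 2) R) = !![a, 0; 0, 1]) (x : R) :
    ⁅d, upperRightHom x⁆ = upperRightHom ((a - 1) * x) := by
  rw [commutatorElement_def, mul_upperRightHom_of_val_eq_diag hd, mul_inv_cancel_right,
    ← AddChar.map_neg_eq_inv, ← AddChar.map_add_eq_mul, sub_mul, one_mul, sub_eq_add_neg]

end UpperRight

/-- The element `h²` belongs to the commutator subgroup of `G = ⟨g, h⟩ ≤ GL₂(ℝ)`,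
where `g = !![1+√2, 0; 0, 1]` and `h = !![1, 1; 0, 1]`. -/
theorem stmt10 (g h : (Matrix (Fin 2) (Fin 2) ℝ)ˣ)
    (hg : (g : Matrix (Fin 2) (Fin 2) ℝ) = !![1 + Real.sqrt 2, 0; 0, 1])
    (hh : (h : Matrix (Fin 2) (Fin 2) ℝ) = !![1, 1; 0, 1]) :
    h ^ 2 ∈ ⁅Subgroup.closure {g, h}, Subgroup.closure {g, h}⁆ := by
  set G := Subgroup.closure {g, h}
  have hu : h = upperRightHom 1 := Units.ext (by simp [hh])
  have hgG : g ∈ G := Subgroup.subset_closure (by simp)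
  have hhG : h ∈ G := Subgroup.subset_closure (by simp)
  have hgh : ⁅g, h⁆ = upperRightHom (Real.sqrt 2) := by
    rw [hu, commutatorElement_upperRightHom_of_val_eq_diag hg]
    ring_nf
  have hggh : h ^ 2 = ⁅g, ⁅g, h⁆⁆ := by
    rw [hgh, commutatorElement_upperRightHom_of_val_eq_diag hg, add_sub_cancel_left,
      Real.mul_self_sqrt zero_le_two, hu, ← AddChar.map_nsmul_eq_pow, two_nsmul,
      one_add_one_eq_two]
  have hghG : ⁅g, h⁆ ∈ G := by
    rw [commutatorElement_def]
    exact mul_mem (mul_mem (mul_mem hgG hhG) (inv_mem hgG)) (inv_mem hhG)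
  rw [hggh]
  exact Subgroup.commutator_mem_commutator hgG hghG
end

section
/- For every nonzero integer n, the element g^n does not belong to the commutator subgroup ⁅G,G⁆ of G; in particular, the image of g in the quotient G/⁅G,G⁆ has infinite order. -/
/-- For every nonzero integer `n`, the element `g^n` does not belong to the commutator
subgroup of `G = ⟨g, h⟩ ≤ GL₂(ℝ)` (`g = !![1+√2, 0; 0, 1]`, `h = !![1, 1; 0, 1]`);
in particular the image of `g` in the abelianization `G/⁅G,G⁆` has infinite order. -/
theorem stmt11 (g h : (Matrix (Fin 2) (Fin 2) ℝ)ˣ)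
    (hg : (g : Matrix (Fin 2) (Fin 2) ℝ) = !![1 + Real.sqrt 2, 0; 0, 1])
    (hh : (h : Matrix (Fin 2) (Fin 2) ℝ) = !![1, 1; 0, 1])
    (hgG : g ∈ Subgroup.closure {g, h}) :
    (∀ n : ℤ, n ≠ 0 →
      g ^ n ∉ ⁅Subgroup.closure {g, h}, Subgroup.closure {g, h}⁆) ∧
    ¬ IsOfFinOrder
      (Abelianization.of (⟨g, hgG⟩ : ↥(Subgroup.closure {g, h}))) := by
  let H : Subgroup (Matrix (Fin 2) (Fin 2) ℝ)ˣ := Subgroup.closure {g, h}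
  -- determinant homomorphism
  let φ : (Matrix (Fin 2) (Fin 2) ℝ)ˣ →* ℝˣ := Units.map (Matrix.detMonoidHom)
  have hdetg : ((φ g : ℝˣ) : ℝ) = 1 + Real.sqrt 2 := by
    show (Matrix.detMonoidHom (g : Matrix (Fin 2) (Fin 2) ℝ)) = _
    rw [show (Matrix.detMonoidHom (g : Matrix (Fin 2) (Fin 2) ℝ)) =
      Matrix.det (g : Matrix (Fin 2) (Fin 2) ℝ) from rfl, hg, Matrix.det_fin_two_of]
    ring
  have hlt : (1 : ℝ) < 1 + Real.sqrt 2 := by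
    have : (0:ℝ) < Real.sqrt 2 := Real.sqrt_pos.mpr (by norm_num)
    linarith
  have key : ∀ n : ℤ, n ≠ 0 → g ^ n ∉ ⁅H, H⁆ := by
    intro n hn hmem
    have h1 : g ^ n ∈ commutator (Matrix (Fin 2) (Fin 2) ℝ)ˣ := by
      rw [commutator_def]
      exact Subgroup.commutator_mono le_top le_top hmem
    have h2 : φ (g ^ n) = 1 := Abelianization.commutator_subset_ker φ h1
    have h3 : ((1 + Real.sqrt 2 : ℝ)) ^ n = 1 := by
      have := congrArg (fun u : ℝˣ => (u : ℝ)) h2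
      simpa [map_zpow, hdetg] using this
    have : n = 0 := by
      have hi := zpow_right_injective₀ (a := (1 + Real.sqrt 2 : ℝ))
        (by linarith) (by linarith)
      have h4 : (1 + Real.sqrt 2 : ℝ) ^ n = (1 + Real.sqrt 2 : ℝ) ^ (0:ℤ) := by
        simpa using h3
      exact hi h4
    exact hn this
  refine ⟨key, ?_⟩
  intro hfin
  obtain ⟨n, hn, hpow⟩ := hfin.exists_pow_eq_one
  have h1 : Abelianization.of ((⟨g, hgG⟩ : H) ^ n) = 1 := by
    rw [map_pow, hpow]
  have h2 : (⟨g, hgG⟩ : H) ^ n ∈ commutator H :=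
    (QuotientGroup.eq_one_iff ((⟨g, hgG⟩ : H) ^ n)).mp h1
  have h3 : g ^ n ∈ ⁅H, H⁆ := by
    have hmap : (commutator H).map H.subtype = ⁅H, H⁆ := by
      rw [commutator_def, Subgroup.map_commutator]
      congr 1 <;> rw [← MonoidHom.range_eq_map, Subgroup.range_subtype]
    rw [← hmap]
    exact ⟨(⟨g, hgG⟩ : H) ^ n, h2, by simp⟩
  have := key (n : ℤ) (by exact_mod_cast hn.ne')
  rw [zpow_natCast] at this
  exact this h3
end

section
/- The abelianization G/⁅G,G⁆ of the group G is isomorphic to ℤ × ℤ/2ℤ. -/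
/-!
`G` consists of the matrices `!![(1 + √2) ^ n, b; 0, 1]` with `n ∈ ℤ`, `b ∈ ℤ[√2]`, so it is the
semidirect product `ℤ[√2] ⋊ ℤ` in which `ℤ` acts through multiplication by the unit `1 + √2`
(faithfully, as `√2` is irrational and `1 + √2 > 1`). The commutator of the generator of `ℤ`
with `b ∈ ℤ[√2]` is `(1 + √2 - 1) b = √2 b`, so the commutator subgroup is `√2 ℤ[√2]`, and the
abelianization is `ℤ × ℤ[√2] / (√2) ≅ ℤ × ℤ/2ℤ`.
-/

open Matrix Matrix.GeneralLinearGroup SemidirectProduct Zsqrtd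
open scoped commutatorElement

noncomputable def Abelianization.mulEquivOfSurjective {G A : Type*} [Group G] [CommGroup A]
    (f : G →* A) (hf : Function.Surjective f) (hker : f.ker ≤ commutator G) :
    Abelianization G ≃* A :=
  (QuotientGroup.quotientMulEquivOfEq
      (le_antisymm (Abelianization.commutator_subset_ker f) hker)).trans
    (QuotientGroup.quotientKerEquivOfSurjective f hf)

namespace Matrix.GeneralLinearGroup

variable {K : Type*} [CommRing K]

def dilation : Kˣ →* GL (Fin 2) K :=
  Units.map ((diagonalRingHom (Fin 2) K).toMonoidHom.comp
    (MonoidHom.mulSingle (fun _ : Fin 2 ↦ K) 0))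

lemma coe_dilation (u : Kˣ) :
    (dilation u : Matrix (Fin 2) (Fin 2) K) = !![(u : K), 0; 0, 1] := by
  ext i j; fin_cases i <;> fin_cases j <;> simp [dilation]

lemma dilation_mul_upperRightHom_mul_inv (u : Kˣ) (x : K) :
    dilation u * upperRightHom x * (dilation u)⁻¹ = upperRightHom (u * x) := by
  rw [mul_inv_eq_iff_eq_mul, Units.ext_iff]
  simp [coe_dilation, mul_comm]

end Matrix.GeneralLinearGroup

namespace SemidirectProduct

variable {R K : Type*} [CommRing R] [CommRing K] (u : Rˣ) (ι : R →+* K)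

def unitPowAut : Multiplicative ℤ →* MulAut (Multiplicative R) :=
  (MulAutMultiplicative R).symm.toMonoidHom.comp
    ((DistribMulAction.toAddAut Rˣ R).comp (zpowersHom _ u))

abbrev UnitPowSemidirect := Multiplicative R ⋊[unitPowAut u] Multiplicative ℤ

lemma unitPowAut_apply (n : Multiplicative ℤ) (x : Multiplicative R) :
    unitPowAut u n x = Multiplicative.ofAdd (((u ^ n.toAdd : Rˣ) : R) * x.toAdd) := rfl

lemma commutatorElement_inr_inl (x : R) :
    ⁅(inr (Multiplicative.ofAdd 1) : UnitPowSemidirect u),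
        (inl (Multiplicative.ofAdd x) : UnitPowSemidirect u)⁆ =
      inl (Multiplicative.ofAdd (((u : R) - 1) * x)) := by
  rw [commutatorElement_def, ← map_inv (inr (φ := unitPowAut u)), ← inl_aut, ← map_inv inl,
    ← map_mul, unitPowAut_apply, ← ofAdd_neg, ← ofAdd_add, sub_one_mul, sub_eq_add_neg,
    toAdd_ofAdd, toAdd_ofAdd, zpow_one]

lemma upperRightHom_unitPowAut (n : Multiplicative ℤ) (x : Multiplicative R) :
    upperRightHom (ι (unitPowAut u n x).toAdd) =
      dilation (Units.map ι.toMonoidHom u) ^ n.toAdd * upperRightHom (ι x.toAdd) *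
        (dilation (Units.map ι.toMonoidHom u) ^ n.toAdd)⁻¹ := by
  rw [← map_zpow, ← map_zpow (Units.map ι.toMonoidHom), dilation_mul_upperRightHom_mul_inv,
    unitPowAut_apply, toAdd_ofAdd, map_mul]
  rfl

def toGL : UnitPowSemidirect u →* GL (Fin 2) K :=
  lift (upperRightHom.toMonoidHom.comp (AddMonoidHom.toMultiplicative ι.toAddMonoidHom))
    (zpowersHom _ (dilation (Units.map ι.toMonoidHom u)))
    fun n ↦ MonoidHom.ext (upperRightHom_unitPowAut u ι n)

lemma coe_toGL (p : UnitPowSemidirect u) :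
    (toGL u ι p : Matrix (Fin 2) (Fin 2) K) =
      !![((Units.map ι.toMonoidHom u ^ p.right.toAdd : Kˣ) : K), ι p.left.toAdd; 0, 1] := by
  rw [← inl_left_mul_inr_right p, map_mul]
  simp [toGL, ← map_zpow, coe_dilation]

lemma toGL_injective (hι : Function.Injective ι)
    (hu : ¬ IsOfFinOrder (Units.map ι.toMonoidHom u)) :
    Function.Injective (toGL u ι) := by
  rw [injective_iff_map_eq_one]
  intro p hp
  have hmat : !![((Units.map ι.toMonoidHom u ^ p.right.toAdd : Kˣ) : K), ι p.left.toAdd; 0, 1] =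
      !![1, 0; 0, 1] := by
    rw [← coe_toGL, hp, Units.val_one, one_fin_two]
  obtain ⟨hpow, hleft⟩ : ((Units.map ι.toMonoidHom u ^ p.right.toAdd : Kˣ) : K) = 1 ∧
      ι p.left.toAdd = 0 := by
    simpa [← Matrix.ext_iff, Fin.forall_fin_two] using hmat
  have hright : p.right.toAdd = 0 :=
    injective_zpow_iff_not_isOfFinOrder.mpr hu (by simp only [zpow_zero]; exact Units.ext hpow)
  ext
  · exact (map_eq_zero_iff ι hι).mp hleft
  · exact hright

end SemidirectProduct

namespace Zsqrtd

def oneAddSqrtTwo : (ℤ√2)ˣ := ⟨⟨1, 1⟩, ⟨-1, 1⟩, rfl, rfl⟩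

lemma coe_oneAddSqrtTwo_sub_one : (oneAddSqrtTwo : ℤ√2) - 1 = sqrtd := rfl

noncomputable def sqrtTwoEmbedding : ℤ√2 →+* ℝ :=
  lift ⟨√2, by norm_num⟩

lemma sqrtTwoEmbedding_injective : Function.Injective sqrtTwoEmbedding :=
  lift_injective _ fun n hn ↦ by
    have : n ≤ 1 := by nlinarith
    have : -1 ≤ n := by nlinarith
    interval_cases n <;> omega

lemma not_isOfFinOrder_map_oneAddSqrtTwo :
    ¬ IsOfFinOrder (Units.map sqrtTwoEmbedding.toMonoidHom oneAddSqrtTwo) := by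
  rw [isOfFinOrder_iff_pow_eq_one]
  rintro ⟨n, hn, hpow⟩
  have hval : (1 + √2) ^ n = 1 := by
    simpa [Units.ext_iff, sqrtTwoEmbedding, oneAddSqrtTwo] using hpow
  have : 1 < (1 + √2) ^ n := one_lt_pow₀ (lt_add_of_pos_right 1 (by positivity)) hn.ne'
  linarith

def reModTwo : ℤ√2 →+* ZMod 2 :=
  lift ⟨0, by decide⟩

lemma reModTwo_coe_unit (v : (ℤ√2)ˣ) : reModTwo v = 1 :=
  congrArg Units.val ((show ∀ w : (ZMod 2)ˣ, w = 1 by decide) (Units.map reModTwo.toMonoidHom v))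

lemma sqrtd_dvd_of_reModTwo_eq_zero {x : ℤ√2} (hx : reModTwo x = 0) : sqrtd ∣ x := by
  obtain ⟨k, hk⟩ : (2 : ℤ) ∣ x.re :=
    (ZMod.intCast_zmod_eq_zero_iff_dvd _ 2).mp (by simpa [reModTwo] using hx)
  exact ⟨⟨x.im, k⟩, by ext <;> simp [hk]⟩

end Zsqrtd

namespace SemidirectProduct

lemma closure_inr_inl_oneAddSqrtTwo_eq_top :
    Subgroup.closure {(inr (Multiplicative.ofAdd 1) : UnitPowSemidirect oneAddSqrtTwo),
      inl (Multiplicative.ofAdd 1)} = ⊤ := by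
  set S := Subgroup.closure {(inr (Multiplicative.ofAdd 1) : UnitPowSemidirect oneAddSqrtTwo),
      inl (Multiplicative.ofAdd 1)}
  have ht : inr (Multiplicative.ofAdd 1) ∈ S := Subgroup.subset_closure (by simp)
  have hone : inl (Multiplicative.ofAdd 1) ∈ S := Subgroup.subset_closure (by simp)
  have hsqrtd : inl (Multiplicative.ofAdd sqrtd) ∈ S := by
    rw [← coe_oneAddSqrtTwo_sub_one, ← mul_one (_ - 1), ← commutatorElement_inr_inl,
      commutatorElement_def]
    exact mul_mem (mul_mem (mul_mem ht hone) (inv_mem ht)) (inv_mem hone)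
  refine eq_top_iff.mpr fun p _ ↦ ?_
  have hleft : p.left = (Multiplicative.ofAdd 1) ^ p.left.toAdd.re *
      (Multiplicative.ofAdd sqrtd) ^ p.left.toAdd.im := by
    rw [← ofAdd_zsmul, ← ofAdd_zsmul, ← ofAdd_add]
    ext <;> simp
  have hright : p.right = (Multiplicative.ofAdd 1) ^ p.right.toAdd := by
    rw [← ofAdd_zsmul, smul_eq_mul, mul_one, ofAdd_toAdd]
  rw [← inl_left_mul_inr_right p, hleft, hright, map_mul, map_zpow, map_zpow, map_zpow]
  exact mul_mem (mul_mem (zpow_mem hone _) (zpow_mem hsqrtd _)) (zpow_mem ht _)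

def oneAddSqrtTwoAbelianHom : UnitPowSemidirect oneAddSqrtTwo →* Multiplicative (ℤ × ZMod 2) :=
  lift (AddMonoidHom.toMultiplicative
      ((AddMonoidHom.inr ℤ (ZMod 2)).comp reModTwo.toAddMonoidHom))
    (AddMonoidHom.toMultiplicative (AddMonoidHom.inl ℤ (ZMod 2)))
    fun n ↦ MonoidHom.ext fun x ↦ by
      simp [unitPowAut_apply, reModTwo_coe_unit]

lemma oneAddSqrtTwoAbelianHom_apply (p : UnitPowSemidirect oneAddSqrtTwo) :
    oneAddSqrtTwoAbelianHom p = Multiplicative.ofAdd (p.right.toAdd, reModTwo p.left.toAdd) := by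
  rw [← inl_left_mul_inr_right p, map_mul]
  simp [oneAddSqrtTwoAbelianHom, ← ofAdd_add]

lemma oneAddSqrtTwoAbelianHom_surjective : Function.Surjective oneAddSqrtTwoAbelianHom :=
  fun y ↦ ⟨⟨Multiplicative.ofAdd (y.toAdd.2.val : ℤ√2), Multiplicative.ofAdd y.toAdd.1⟩, by
    rw [oneAddSqrtTwoAbelianHom_apply]
    simp⟩

lemma ker_oneAddSqrtTwoAbelianHom_le_commutator :
    oneAddSqrtTwoAbelianHom.ker ≤ commutator (UnitPowSemidirect oneAddSqrtTwo) := by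
  intro p hp
  rw [MonoidHom.mem_ker, oneAddSqrtTwoAbelianHom_apply, ofAdd_eq_one, Prod.mk_eq_zero] at hp
  obtain ⟨y, hy⟩ := sqrtd_dvd_of_reModTwo_eq_zero hp.2
  have hp' : p = inl (Multiplicative.ofAdd ((oneAddSqrtTwo - 1 : ℤ√2) * y)) := by
    refine SemidirectProduct.ext ?_ ?_
    · rw [left_inl, coe_oneAddSqrtTwo_sub_one, ← hy, ofAdd_toAdd]
    · rw [right_inl, ← ofAdd_toAdd p.right, hp.1, ofAdd_zero]
  rw [hp', ← commutatorElement_inr_inl, commutator_def]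
  exact Subgroup.commutator_mem_commutator (Subgroup.mem_top _) (Subgroup.mem_top _)

end SemidirectProduct

/-- The abelianization `G/⁅G,G⁆` of `G = ⟨g, h⟩ ≤ GL₂(ℝ)`
(`g = !![1+√2, 0; 0, 1]`, `h = !![1, 1; 0, 1]`) is isomorphic to `ℤ × ℤ/2ℤ`. -/
theorem stmt12 (g h : (Matrix (Fin 2) (Fin 2) ℝ)ˣ)
    (hg : (g : Matrix (Fin 2) (Fin 2) ℝ) = !![1 + Real.sqrt 2, 0; 0, 1])
    (hh : (h : Matrix (Fin 2) (Fin 2) ℝ) = !![1, 1; 0, 1]) :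
    Nonempty (Abelianization ↥(Subgroup.closure {g, h})
      ≃* Multiplicative (ℤ × ZMod 2)) := by
  set ψ := toGL oneAddSqrtTwo sqrtTwoEmbedding
  have hψg : ψ (inr (Multiplicative.ofAdd 1)) = g :=
    Units.ext (by rw [coe_toGL, hg, right_inr, left_inr]; simp [sqrtTwoEmbedding, oneAddSqrtTwo])
  have hψh : ψ (inl (Multiplicative.ofAdd 1)) = h :=
    Units.ext (by rw [coe_toGL, hh, right_inl, left_inl]; simp [sqrtTwoEmbedding])
  have hrange : Subgroup.closure {g, h} = ψ.range := by
    rw [MonoidHom.range_eq_map, ← closure_inr_inl_oneAddSqrtTwo_eq_top, MonoidHom.map_closure,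
      Set.image_pair, hψg, hψh]
  have hψ : Function.Injective ψ := toGL_injective _ _ sqrtTwoEmbedding_injective
    not_isOfFinOrder_map_oneAddSqrtTwo
  exact ⟨((MulEquiv.subgroupCongr hrange).trans (MonoidHom.ofInjective hψ).symm).abelianizationCongr
    |>.trans (Abelianization.mulEquivOfSurjective oneAddSqrtTwoAbelianHom
      oneAddSqrtTwoAbelianHom_surjective ker_oneAddSqrtTwoAbelianHom_le_commutator)⟩
end
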